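/- Set M0 = f(x0) + (ε(0)/2)‖ẋ0‖² and K0 = {y ∈ ℝⁿ : f(y) ≤ M0}. Then K0 is bounded, every solution x of (VM-DIN-AVD) (for any admissible pair (ε, α) with the same ε(0), x0, ẋ0) satisfies x(t) ∈ K0 for all t ≥ 0, and the solution x_N of (CN) with x_N(0) = x0 also satisfies x_N(t) ∈ K0 for all t ≥ 0. -/

import Mathlib

open Real Filter MeasureTheory Set

noncomputable def hessApp {n : ℕ} (f : EuclideanSpace ℝ (Fin n) → ℝ)
    (x v : EuclideanSpace ℝ (Fin n)) : EuclideanSpace ℝ (Fin n) :=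
  fderiv ℝ (gradient f) x v

def StandingF {n : ℕ} (f : EuclideanSpace ℝ (Fin n) → ℝ) : Prop :=
  ConvexOn ℝ Set.univ f ∧ ContDiff ℝ 2 f ∧
    Filter.Tendsto f (Filter.cocompact _) Filter.atTop ∧
    ∀ s : Set (EuclideanSpace ℝ (Fin n)), Bornology.IsBounded s →
      ∃ μ > 0, StrongConvexOn s μ f

def AdmissibleEps (ε : ℝ → ℝ) : Prop :=
  AntitoneOn ε (Set.Ici 0) ∧ (∀ t ∈ Set.Ici (0:ℝ), 0 < ε t) ∧
    Differentiable ℝ ε ∧ Differentiable ℝ (deriv ε) ∧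
    ∃ M, ∀ t ∈ Set.Ici (0:ℝ), |deriv (deriv ε) t| ≤ M

def AdmissibleAlpha (α : ℝ → ℝ) : Prop :=
  AntitoneOn α (Set.Ici 0) ∧ (∀ t ∈ Set.Ici (0:ℝ), 0 ≤ α t) ∧ Differentiable ℝ α

def IsSolVM {n : ℕ} (f : EuclideanSpace ℝ (Fin n) → ℝ) (β : ℝ) (ε α : ℝ → ℝ)
    (x : ℝ → EuclideanSpace ℝ (Fin n)) (x0 v0 : EuclideanSpace ℝ (Fin n)) : Prop :=
  ContDiff ℝ 2 x ∧ x 0 = x0 ∧ deriv x 0 = v0 ∧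
    ∀ t ∈ Set.Ici (0:ℝ),
      ε t • deriv (deriv x) t + α t • deriv x t
        + β • hessApp f (x t) (deriv x t) + gradient f (x t) = 0

def IsSolCN {n : ℕ} (f : EuclideanSpace ℝ (Fin n) → ℝ) (β : ℝ)
    (x : ℝ → EuclideanSpace ℝ (Fin n)) (x0 : EuclideanSpace ℝ (Fin n)) : Prop :=
  ContDiff ℝ 1 x ∧ x 0 = x0 ∧
    ∀ t ∈ Set.Ici (0:ℝ), β • hessApp f (x t) (deriv x t) + gradient f (x t) = 0

def IsSolLM {n : ℕ} (f : EuclideanSpace ℝ (Fin n) → ℝ) (β : ℝ) (α : ℝ → ℝ)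
    (x : ℝ → EuclideanSpace ℝ (Fin n)) (x0 : EuclideanSpace ℝ (Fin n)) : Prop :=
  ContDiff ℝ 1 x ∧ x 0 = x0 ∧
    ∀ t ∈ Set.Ici (0:ℝ),
      α t • deriv x t + β • hessApp f (x t) (deriv x t) + gradient f (x t) = 0

/-! Along (VM-DIN-AVD) the energy `f(x) + ε/2 ‖ẋ‖²` is nonincreasing: testing the equation
against `ẋ` shows that its derivative is `(ε'/2 - α) ‖ẋ‖² - β ⟪∇²f(x) ẋ, ẋ⟫ ≤ 0`, because
`ε` is nonincreasing, `α ≥ 0`, and the Hessian of a convex function is positive semidefinite.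
Along (CN) the same test gives `d/dt f(x_N) = -β ⟪∇²f(x_N) ẋ_N, ẋ_N⟫ ≤ 0`. Both quantities
are at most `M0` at time 0, and sublevel sets of a coercive function are bounded. -/

open scoped RealInnerProductSpace Gradient

theorem isBounded_setOf_le_of_tendsto_cocompact {X : Type*} [PseudoMetricSpace X] {f : X → ℝ}
    (hf : Tendsto f (cocompact X) atTop) (M : ℝ) : Bornology.IsBounded {z | f z ≤ M} := by
  rw [Bornology.isBounded_def]
  exact Metric.cobounded_le_cocompact ((hf.eventually_gt_atTop M).mono fun _ ↦ not_le.mpr)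

theorem antitoneOn_Ici_of_hasDerivAt_nonpos {g g' : ℝ → ℝ} (hg : ∀ t, HasDerivAt g (g' t) t)
    (hg' : ∀ t > 0, g' t ≤ 0) : AntitoneOn g (Ici 0) := by
  refine antitoneOn_of_deriv_nonpos (convex_Ici 0)
    (fun t _ ↦ (hg t).continuousAt.continuousWithinAt)
    (fun t _ ↦ (hg t).differentiableAt.differentiableWithinAt) fun t ht ↦ ?_
  rw [interior_Ici] at ht
  rw [(hg t).deriv]
  exact hg' t ht

section Gradient

variable {E : Type*} [NormedAddCommGroup E] [InnerProductSpace ℝ E] [CompleteSpace E] {f : E → ℝ}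

theorem DifferentiableAt.hasDerivAt_comp_inner_gradient {γ : ℝ → E} {γ' : E} {t : ℝ}
    (hf : DifferentiableAt ℝ f (γ t)) (hγ : HasDerivAt γ γ' t) :
    HasDerivAt (fun s ↦ f (γ s)) ⟪∇ f (γ t), γ'⟫ t := by
  rw [inner_gradient_left]
  exact hf.hasFDerivAt.comp_hasDerivAt t hγ

theorem ContDiff.differentiable_gradient (hf : ContDiff ℝ 2 f) : Differentiable ℝ (∇ f) :=
  (InnerProductSpace.toDual ℝ E).symm.differentiable.comp
    ((hf.fderiv_right (m := 1) (by norm_num)).differentiable one_ne_zero)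

theorem ConvexOn.inner_fderiv_gradient_apply_self_nonneg (hconv : ConvexOn ℝ univ f)
    (hf : ContDiff ℝ 2 f) (x v : E) : 0 ≤ ⟪fderiv ℝ (∇ f) x v, v⟫ := by
  have hline (s : ℝ) : HasDerivAt (fun s : ℝ ↦ x + s • v) v s := by
    simpa using ((hasDerivAt_id s).smul_const v).const_add x
  have hφ (s : ℝ) : HasDerivAt (fun s ↦ f (x + s • v)) ⟪∇ f (x + s • v), v⟫ s :=
    (hf.differentiable two_ne_zero _).hasDerivAt_comp_inner_gradient (hline s)
  have hφconv : ConvexOn ℝ univ (fun s : ℝ ↦ f (x + s • v)) := by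
    have hcomp : (fun s : ℝ ↦ f (x + s • v)) = f ∘ AffineMap.lineMap x (x + v) := by
      ext s
      rw [Function.comp_apply, AffineMap.lineMap_apply_module', add_sub_cancel_left, add_comm]
    simpa [hcomp] using hconv.comp_affineMap (AffineMap.lineMap x (x + v))
  have hmono : Monotone fun s ↦ ⟪∇ f (x + s • v), v⟫ := fun a b hab ↦ by
    simpa only [(hφ _).deriv] using
      hφconv.monotoneOn_deriv (fun s _ ↦ (hφ s).differentiableAt) trivial trivial hab
  have hψ : HasDerivAt (fun s : ℝ ↦ ⟪∇ f (x + s • v), v⟫) ⟪fderiv ℝ (∇ f) x v, v⟫ 0 := by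
    have hγ := (hf.differentiable_gradient (x + (0 : ℝ) • v)).hasFDerivAt.comp_hasDerivAt 0
      (hline 0)
    simpa using hγ.inner ℝ (hasDerivAt_const 0 v)
  exact hψ.nonneg_of_monotone hmono

noncomputable def vmEnergy (f : E → ℝ) (ε : ℝ → ℝ) (x : ℝ → E) (t : ℝ) : ℝ :=
  f (x t) + ε t / 2 * ‖deriv x t‖ ^ 2

theorem hasDerivAt_vmEnergy {ε : ℝ → ℝ} {x : ℝ → E} (hf : Differentiable ℝ f)
    (hε : Differentiable ℝ ε) (hx : ContDiff ℝ 2 x) (t : ℝ) :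
    HasDerivAt (vmEnergy f ε x) (⟪∇ f (x t), deriv x t⟫ + (deriv ε t / 2 * ‖deriv x t‖ ^ 2
      + ε t / 2 * (2 * ⟪deriv x t, deriv (deriv x) t⟫))) t := by
  have hx' : Differentiable ℝ (deriv x) :=
    (contDiff_succ_iff_deriv.mp hx).2.2.differentiable one_ne_zero
  exact (hf _).hasDerivAt_comp_inner_gradient ((hx.differentiable two_ne_zero) t).hasDerivAt
    |>.add <| ((hε t).hasDerivAt.div_const 2).mul (hx' t).hasDerivAt.norm_sq

end Gradient

section Flows

variable {n : ℕ} {f : EuclideanSpace ℝ (Fin n) → ℝ} {β : ℝ}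

theorem IsSolVM.antitoneOn_vmEnergy {ε α : ℝ → ℝ} {x : ℝ → EuclideanSpace ℝ (Fin n)}
    {x0 v0 : EuclideanSpace ℝ (Fin n)} (hsol : IsSolVM f β ε α x x0 v0)
    (hconv : ConvexOn ℝ univ f) (hf : ContDiff ℝ 2 f) (hβ : 0 ≤ β)
    (hε : AntitoneOn ε (Ici 0)) (hεd : Differentiable ℝ ε) (hα : ∀ t ∈ Ici (0 : ℝ), 0 ≤ α t) :
    AntitoneOn (vmEnergy f ε x) (Ici 0) := by
  obtain ⟨hx, -, -, hode⟩ := hsol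
  refine antitoneOn_Ici_of_hasDerivAt_nonpos
    (hasDerivAt_vmEnergy (hf.differentiable two_ne_zero) hεd hx) fun t ht ↦ ?_
  have hε' : deriv ε t ≤ 0 := by
    rw [← derivWithin_of_mem_nhds (Ici_mem_nhds ht)]
    exact hε.derivWithin_nonpos
  have hH := hconv.inner_fderiv_gradient_apply_self_nonneg hf (x t) (deriv x t)
  have hbal := congrArg (⟪·, deriv x t⟫) (hode t ht.le)
  simp only [hessApp, inner_add_left, real_inner_smul_left, inner_zero_left,
    real_inner_self_eq_norm_sq] at hbal
  have hαt := hα t ht.le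
  rw [real_inner_comm (deriv (deriv x) t)]
  calc _ = deriv ε t / 2 * ‖deriv x t‖ ^ 2 - α t * ‖deriv x t‖ ^ 2
        - β * ⟪fderiv ℝ (∇ f) (x t) (deriv x t), deriv x t⟫ := by linear_combination hbal
    _ ≤ 0 := by
      have := sq_nonneg ‖deriv x t‖
      nlinarith [mul_nonneg hβ hH, mul_nonneg hαt this, mul_nonpos_of_nonpos_of_nonneg hε' this]

theorem IsSolCN.antitoneOn_comp {x : ℝ → EuclideanSpace ℝ (Fin n)} {x0 : EuclideanSpace ℝ (Fin n)}
    (hsol : IsSolCN f β x x0) (hconv : ConvexOn ℝ univ f) (hf : ContDiff ℝ 2 f) (hβ : 0 ≤ β) :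
    AntitoneOn (fun t ↦ f (x t)) (Ici 0) := by
  obtain ⟨hx, -, hode⟩ := hsol
  refine antitoneOn_Ici_of_hasDerivAt_nonpos (fun t ↦ (hf.differentiable two_ne_zero _)
    |>.hasDerivAt_comp_inner_gradient ((hx.differentiable one_ne_zero) t).hasDerivAt)
    fun t ht ↦ ?_
  have hH := hconv.inner_fderiv_gradient_apply_self_nonneg hf (x t) (deriv x t)
  have hbal := congrArg (⟪·, deriv x t⟫) (hode t ht.le)
  simp only [hessApp, inner_add_left, real_inner_smul_left, inner_zero_left] at hbal
  linarith [mul_nonneg hβ hH]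

end Flows

theorem stmt4 {n : ℕ} (f : EuclideanSpace ℝ (Fin n) → ℝ) (β : ℝ) (hβ : 0 < β)
    (hf : StandingF f) (x0 v0 : EuclideanSpace ℝ (Fin n)) (ε0 : ℝ) (hε0 : 0 < ε0)
    (M0 : ℝ) (hM0 : M0 = f x0 + ε0 / 2 * ‖v0‖ ^ 2)
    (K0 : Set (EuclideanSpace ℝ (Fin n))) (hK0 : K0 = {z | f z ≤ M0}) :
    Bornology.IsBounded K0 ∧
    (∀ ε α : ℝ → ℝ, ∀ x : ℝ → EuclideanSpace ℝ (Fin n),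
      AdmissibleEps ε → AdmissibleAlpha α → ε 0 = ε0 →
      IsSolVM f β ε α x x0 v0 → ∀ t ∈ Set.Ici (0:ℝ), x t ∈ K0) ∧
    (∀ xN : ℝ → EuclideanSpace ℝ (Fin n),
      IsSolCN f β xN x0 → ∀ t ∈ Set.Ici (0:ℝ), xN t ∈ K0) := by
  obtain ⟨hconv, hf2, hcoer, -⟩ := hf
  subst hK0 hM0
  refine ⟨isBounded_setOf_le_of_tendsto_cocompact hcoer _, ?_, ?_⟩
  · rintro ε α x ⟨hεanti, hεpos, hεd, -⟩ ⟨-, hα, -⟩ rfl hsol t ht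
    have hdecay := hsol.antitoneOn_vmEnergy hconv hf2 hβ.le hεanti hεd hα self_mem_Ici ht ht
    have hkin : 0 ≤ ε t / 2 * ‖deriv x t‖ ^ 2 := by have := hεpos t ht; positivity
    simp only [vmEnergy, hsol.2.1, hsol.2.2.1] at hdecay
    exact show f (x t) ≤ _ by linarith
  · rintro xN hsol t ht
    have hdecay := hsol.antitoneOn_comp hconv hf2 hβ.le self_mem_Ici ht ht
    have hkin : 0 ≤ ε0 / 2 * ‖v0‖ ^ 2 := by positivity
    simp only [hsol.2.1] at hdecay
    exact show f (xN t) ≤ _ by linarith
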